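/- Let K be a conformal matching covered subgraph of a simple bipartite matching covered graph H, and let e be a removable edge of K. Then e is a removable edge of H. -/

import Mathlib

/-! Preamble: definitions for matching covered graphs, bricks, removable
doubletons, R-compatible/R-thin edges, retracts, ladders, partial biwheels,
R-configurations, and the eleven infinite families. -/

/-- The graph has a perfect matching. -/
def HasPerfMatching {V : Type*} (G : SimpleGraph V) : Prop :=
  ∃ M : G.Subgraph, M.IsPerfectMatching

/-- A graph (with at least two vertices) is matching covered if it is connected
and each of its edges lies in some perfect matching. -/
def MatchingCovered {V : Type*} (G : SimpleGraph V) : Prop :=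
  2 ≤ Nat.card V ∧ G.Connected ∧
    ∀ e ∈ G.edgeSet, ∃ M : G.Subgraph, M.IsPerfectMatching ∧ e ∈ M.edgeSet

/-- An edge of a matching covered graph is removable if deleting it leaves a
matching covered graph. -/
def RemovableEdge {V : Type*} (G : SimpleGraph V) (e : Sym2 V) : Prop :=
  e ∈ G.edgeSet ∧ MatchingCovered (G.deleteEdges {e})

/-- The number of odd connected components. -/
noncomputable def oddCompCount {V : Type*} (G : SimpleGraph V) : ℕ :=
  Nat.card {c : G.ConnectedComponent // Odd (Nat.card c.supp)}

/-- `S` is a barrier of `G`: `S` is nonempty and the number of odd components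
of `G − S` equals `|S|`. -/
def IsBarrierOf {V : Type*} (G : SimpleGraph V) (S : Set V) : Prop :=
  S.Nonempty ∧ oddCompCount (G.induce (Sᶜ : Set V)) = S.ncard

/-- Bicritical: at least four vertices, and deleting any two distinct vertices
leaves a graph with a perfect matching. -/
def BicriticalGraph {V : Type*} (G : SimpleGraph V) : Prop :=
  4 ≤ Nat.card V ∧ ∀ u v : V, u ≠ v →
    HasPerfMatching (G.induce (({u, v} : Set V)ᶜ))

/-- 3-connected: at least four vertices, and deleting any set of at most two
vertices leaves a connected graph. -/
def ThreeConnectedGraph {V : Type*} (G : SimpleGraph V) : Prop :=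
  4 ≤ Nat.card V ∧ ∀ S : Set V, S.ncard ≤ 2 → (G.induce (Sᶜ : Set V)).Connected

/-- A brick is a 3-connected bicritical graph. -/
def BrickGraph {V : Type*} (G : SimpleGraph V) : Prop :=
  ThreeConnectedGraph G ∧ BicriticalGraph G

/-- `A`, `B` form a bipartition of `G`. -/
def BipartitionOf {V : Type*} (G : SimpleGraph V) (A B : Set V) : Prop :=
  A ∪ B = Set.univ ∧ Disjoint A B ∧ ∀ ⦃u v : V⦄, G.Adj u v → (u ∈ A ↔ v ∈ B)

/-- `G` is bipartite. -/
def BipartiteGraph {V : Type*} (G : SimpleGraph V) : Prop :=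
  ∃ A B : Set V, BipartitionOf G A B

/-- `{α, β}` is a removable doubleton of `G`: a pair of distinct edges whose
deletion leaves a bipartite matching covered graph. -/
def RemovableDoubleton {V : Type*} (G : SimpleGraph V) (α β : Sym2 V) : Prop :=
  α ≠ β ∧ α ∈ G.edgeSet ∧ β ∈ G.edgeSet ∧
    BipartiteGraph (G.deleteEdges {α, β}) ∧ MatchingCovered (G.deleteEdges {α, β})

/-- An `R`-brick: a brick with a fixed removable doubleton `R = {α, β}`. -/
def RBrick {V : Type*} (G : SimpleGraph V) (α β : Sym2 V) : Prop :=
  BrickGraph G ∧ RemovableDoubleton G α β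

/-- `V(R)`: the set of the four ends of the doubleton edges. -/
def VR {V : Type*} (α β : Sym2 V) : Set V := {v | v ∈ α ∨ v ∈ β}

/-- `e` is `R`-compatible: it is an edge of `H := G − R` and is removable in
both `G` and `H`. -/
def RCompatible {V : Type*} (G : SimpleGraph V) (α β e : Sym2 V) : Prop :=
  e ∈ (G.deleteEdges {α, β}).edgeSet ∧
    MatchingCovered (G.deleteEdges {e}) ∧
    MatchingCovered ((G.deleteEdges {α, β}).deleteEdges {e})

/-- `e` is `R`-thin: `R`-compatible, and every barrier of `G − e` has at most
two vertices. -/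
def RThin {V : Type*} (G : SimpleGraph V) (α β e : Sym2 V) : Prop :=
  RCompatible G α β e ∧
    ∀ S : Set V, IsBarrierOf (G.deleteEdges {e}) S → S.ncard ≤ 2

/-- The number of maximal nontrivial barriers of a graph. -/
noncomputable def barrierIndex {V : Type*} (G : SimpleGraph V) : ℕ :=
  Set.ncard {S : Set V | IsBarrierOf G S ∧ 2 ≤ S.ncard ∧
    ∀ T : Set V, IsBarrierOf G T → S ⊆ T → T = S}

/-- Degree of a vertex (as the cardinality of its neighbourhood). -/
noncomputable def degOf {V : Type*} (G : SimpleGraph V) (v : V) : ℕ :=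
  (G.neighborSet v).ncard

/-- The relation identifying each degree-two vertex with its neighbours
(bicontraction of all degree-two vertices at once). -/
def bicontractPairRel {V : Type*} (G : SimpleGraph V) (u v : V) : Prop :=
  G.Adj u v ∧ (degOf G u = 2 ∨ degOf G v = 2)

/-- The vertex identifications performed when taking the retract. -/
def retractSetoid {V : Type*} (G : SimpleGraph V) : Setoid V :=
  Relation.EqvGen.setoid (bicontractPairRel G)

/-- The retract of `G` (as a simple graph on the quotient). -/
def retractGraph {V : Type*} (G : SimpleGraph V) :
    SimpleGraph (Quotient (retractSetoid G)) where
  Adj X Y := X ≠ Y ∧ ∃ u v : V,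
    Quotient.mk (retractSetoid G) u = X ∧ Quotient.mk (retractSetoid G) v = Y ∧ G.Adj u v
  symm := ⟨by
    rintro X Y ⟨hne, u, v, hu, hv, huv⟩
    exact ⟨hne.symm, v, u, hv, hu, huv.symm⟩⟩
  loopless := ⟨by
    rintro X ⟨hne, -⟩
    exact hne rfl⟩

/-- The retract of `G` has a pair of parallel edges. -/
def retractHasParallel {V : Type*} (G : SimpleGraph V) : Prop :=
  ∃ p q p' q' : V, G.Adj p q ∧ G.Adj p' q' ∧ s(p, q) ≠ s(p', q') ∧
    ¬ Relation.EqvGen (bicontractPairRel G) p q ∧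
    ((Relation.EqvGen (bicontractPairRel G) p p' ∧
        Relation.EqvGen (bicontractPairRel G) q q') ∨
     (Relation.EqvGen (bicontractPairRel G) p q' ∧
        Relation.EqvGen (bicontractPairRel G) q p'))

/-- `e` is strictly `R`-thin: `R`-thin and the retract of `G − e` has no
parallel edges. -/
def StrictlyRThin {V : Type*} (G : SimpleGraph V) (α β e : Sym2 V) : Prop :=
  RThin G α β e ∧ ¬ retractHasParallel (G.deleteEdges {e})

/-- The ladder with `m` rungs: two paths `x₀…x_{m-1}` (first coordinate `0`)
and `y₀…y_{m-1}` (first coordinate `1`) together with the rungs `xᵢyᵢ`. -/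
def ladderGraph (m : ℕ) : SimpleGraph (Fin 2 × Fin m) :=
  SimpleGraph.fromRel (fun p q =>
    (p.1 = q.1 ∧ p.2.val + 1 = q.2.val) ∨ (p.1 ≠ q.1 ∧ p.2 = q.2))

/-- The partial biwheel on the odd path `x₀…x_{2k-1}` (the `inl` vertices)
with hubs `u = inr 0` (joined to the even-indexed path vertices) and
`w = inr 1` (joined to the odd-indexed path vertices). -/
def biwheelGraph (k : ℕ) : SimpleGraph (Fin (2 * k) ⊕ Fin 2) :=
  SimpleGraph.fromRel (fun p q =>
    match p, q with
    | Sum.inl i, Sum.inl j => i.val + 1 = j.val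
    | Sum.inr h, Sum.inl i => (h = 0 ∧ i.val % 2 = 0) ∨ (h = 1 ∧ i.val % 2 = 1)
    | _, _ => False)

/-- The subgraph `K` of `Γ` is a ladder with `m` rungs and corners `a u b w`:
`au` and `bw` are its external rungs, labelled according to the convention
that `a` and `w` lie in one colour class and `b` and `u` in the other. -/
def LadderOn {W : Type*} (Γ : SimpleGraph W) (K : Γ.Subgraph) (m : ℕ)
    (a u b w : W) : Prop :=
  ∃ (hm : 3 ≤ m) (φ : ladderGraph m ≃g K.coe),
    (φ ((0 : Fin 2), (⟨0, by omega⟩ : Fin m))).val = a ∧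
    (φ ((1 : Fin 2), (⟨0, by omega⟩ : Fin m))).val = u ∧
    (if m % 2 = 1 then
        (φ ((0 : Fin 2), (⟨m - 1, by omega⟩ : Fin m))).val = w ∧
        (φ ((1 : Fin 2), (⟨m - 1, by omega⟩ : Fin m))).val = b
      else
        (φ ((1 : Fin 2), (⟨m - 1, by omega⟩ : Fin m))).val = w ∧
        (φ ((0 : Fin 2), (⟨m - 1, by omega⟩ : Fin m))).val = b)

/-- The subgraph `K` of `Γ` is a partial biwheel (parameter `k`, order `2k+2`)
with ends `a`, `b` and hubs `u`, `w`; its external spokes are `au` and `bw`. -/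
def BiwheelOn {W : Type*} (Γ : SimpleGraph W) (K : Γ.Subgraph) (k : ℕ)
    (a u b w : W) : Prop :=
  ∃ (hk : 2 ≤ k) (φ : biwheelGraph k ≃g K.coe),
    (φ (Sum.inl (⟨0, by omega⟩ : Fin (2 * k)))).val = a ∧
    (φ (Sum.inl (⟨2 * k - 1, by omega⟩ : Fin (2 * k)))).val = b ∧
    (φ (Sum.inr 0)).val = u ∧
    (φ (Sum.inr 1)).val = w

/-- Truncated biwheel: a spanning partial biwheel plus the edges `aw`, `bu`. -/
def IsTruncatedBiwheel {V : Type*} (G : SimpleGraph V) : Prop :=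
  ∃ (K : G.Subgraph) (k : ℕ) (a u b w : V),
    BiwheelOn G K k a u b w ∧ K.verts = Set.univ ∧
    G.edgeSet = K.edgeSet ∪ {s(a, w), s(b, u)}

/-- Prism: a spanning odd ladder plus the edges `aw`, `bu`. -/
def IsPrism {V : Type*} (G : SimpleGraph V) : Prop :=
  ∃ (K : G.Subgraph) (m : ℕ) (a u b w : V),
    Odd m ∧ LadderOn G K m a u b w ∧ K.verts = Set.univ ∧
    G.edgeSet = K.edgeSet ∪ {s(a, w), s(b, u)}

/-- Möbius ladder: a spanning even ladder plus the edges `aw`, `bu`;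
by convention `K₄` is also a Möbius ladder. -/
def IsMobiusLadder {V : Type*} (G : SimpleGraph V) : Prop :=
  (∃ (K : G.Subgraph) (m : ℕ) (a u b w : V),
    Even m ∧ LadderOn G K m a u b w ∧ K.verts = Set.univ ∧
    G.edgeSet = K.edgeSet ∪ {s(a, w), s(b, u)}) ∨
  Nonempty (G ≃g (⊤ : SimpleGraph (Fin 4)))

/-- Staircase: a ladder plus two new vertices `a₂`, `b₂` and the five edges
`a a₂`, `u a₂`, `b b₂`, `w b₂`, `a₂ b₂`. -/
def IsStaircase {V : Type*} (G : SimpleGraph V) : Prop :=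
  ∃ (K : G.Subgraph) (m : ℕ) (a u b w a2 b2 : V),
    LadderOn G K m a u b w ∧
    a2 ∉ K.verts ∧ b2 ∉ K.verts ∧ a2 ≠ b2 ∧
    K.verts ∪ {a2, b2} = Set.univ ∧
    G.edgeSet = K.edgeSet ∪ {s(a, a2), s(u, a2), s(b, b2), s(w, b2), s(a2, b2)}

/-- Pseudo-biwheel: a partial biwheel of order at least eight plus two new
vertices `a₂`, `b₂` and the five edges `a a₂`, `u a₂`, `b b₂`, `w b₂`,
`a₂ b₂`. -/
def IsPseudoBiwheel {V : Type*} (G : SimpleGraph V) : Prop :=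
  ∃ (K : G.Subgraph) (k : ℕ) (a u b w a2 b2 : V),
    3 ≤ k ∧ BiwheelOn G K k a u b w ∧
    a2 ∉ K.verts ∧ b2 ∉ K.verts ∧ a2 ≠ b2 ∧
    K.verts ∪ {a2, b2} = Set.univ ∧
    G.edgeSet = K.edgeSet ∪ {s(a, a2), s(u, a2), s(b, b2), s(w, b2), s(a2, b2)}

/-- Double biwheel of type I: two partial biwheels sharing precisely their
hubs `u`, `w`, plus the edges `a₁a₂` and `b₁b₂`. -/
def IsDoubleBiwheelI {V : Type*} (G : SimpleGraph V) : Prop :=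
  ∃ (K1 K2 : G.Subgraph) (k1 k2 : ℕ) (a1 b1 a2 b2 u w : V),
    BiwheelOn G K1 k1 a1 u b1 w ∧ BiwheelOn G K2 k2 a2 u b2 w ∧
    K1.verts ∩ K2.verts = {u, w} ∧ K1.verts ∪ K2.verts = Set.univ ∧
    G.edgeSet = K1.edgeSet ∪ K2.edgeSet ∪ {s(a1, a2), s(b1, b2)}

/-- Double ladder of type I. -/
def IsDoubleLadderI {V : Type*} (G : SimpleGraph V) : Prop :=
  ∃ (K1 K2 : G.Subgraph) (m1 m2 : ℕ) (a1 b1 a2 b2 u w : V),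
    LadderOn G K1 m1 a1 u b1 w ∧ LadderOn G K2 m2 a2 u b2 w ∧
    K1.verts ∩ K2.verts = {u, w} ∧ K1.verts ∪ K2.verts = Set.univ ∧
    G.edgeSet = K1.edgeSet ∪ K2.edgeSet ∪ {s(a1, a2), s(b1, b2)}

/-- Laddered biwheel of type I. -/
def IsLadderedBiwheelI {V : Type*} (G : SimpleGraph V) : Prop :=
  ∃ (K1 K2 : G.Subgraph) (k1 m2 : ℕ) (a1 b1 a2 b2 u w : V),
    BiwheelOn G K1 k1 a1 u b1 w ∧ LadderOn G K2 m2 a2 u b2 w ∧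
    K1.verts ∩ K2.verts = {u, w} ∧ K1.verts ∪ K2.verts = Set.univ ∧
    G.edgeSet = K1.edgeSet ∪ K2.edgeSet ∪ {s(a1, a2), s(b1, b2)}

/-- Double biwheel of type II: two vertex-disjoint partial biwheels of order
at least eight plus the four edges `a₁a₂`, `b₁b₂`, `u₁w₂`, `w₁u₂`. -/
def IsDoubleBiwheelII {V : Type*} (G : SimpleGraph V) : Prop :=
  ∃ (K1 K2 : G.Subgraph) (k1 k2 : ℕ) (a1 u1 b1 w1 a2 u2 b2 w2 : V),
    3 ≤ k1 ∧ 3 ≤ k2 ∧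
    BiwheelOn G K1 k1 a1 u1 b1 w1 ∧ BiwheelOn G K2 k2 a2 u2 b2 w2 ∧
    K1.verts ∩ K2.verts = ∅ ∧ K1.verts ∪ K2.verts = Set.univ ∧
    G.edgeSet = K1.edgeSet ∪ K2.edgeSet ∪
      {s(a1, a2), s(b1, b2), s(u1, w2), s(w1, u2)}

/-- Double ladder of type II. -/
def IsDoubleLadderII {V : Type*} (G : SimpleGraph V) : Prop :=
  ∃ (K1 K2 : G.Subgraph) (m1 m2 : ℕ) (a1 u1 b1 w1 a2 u2 b2 w2 : V),
    LadderOn G K1 m1 a1 u1 b1 w1 ∧ LadderOn G K2 m2 a2 u2 b2 w2 ∧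
    K1.verts ∩ K2.verts = ∅ ∧ K1.verts ∪ K2.verts = Set.univ ∧
    G.edgeSet = K1.edgeSet ∪ K2.edgeSet ∪
      {s(a1, a2), s(b1, b2), s(u1, w2), s(w1, u2)}

/-- Laddered biwheel of type II. -/
def IsLadderedBiwheelII {V : Type*} (G : SimpleGraph V) : Prop :=
  ∃ (K1 K2 : G.Subgraph) (k1 m2 : ℕ) (a1 u1 b1 w1 a2 u2 b2 w2 : V),
    3 ≤ k1 ∧
    BiwheelOn G K1 k1 a1 u1 b1 w1 ∧ LadderOn G K2 m2 a2 u2 b2 w2 ∧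
    K1.verts ∩ K2.verts = ∅ ∧ K1.verts ∪ K2.verts = Set.univ ∧
    G.edgeSet = K1.edgeSet ∪ K2.edgeSet ∪
      {s(a1, a2), s(b1, b2), s(u1, w2), s(w1, u2)}

/-- Membership in one of the eleven infinite families. -/
def InEleven {V : Type*} (G : SimpleGraph V) : Prop :=
  IsTruncatedBiwheel G ∨ IsPrism G ∨ IsMobiusLadder G ∨ IsStaircase G ∨
  IsPseudoBiwheel G ∨ IsDoubleBiwheelI G ∨ IsDoubleLadderI G ∨
  IsLadderedBiwheelI G ∨ IsDoubleBiwheelII G ∨ IsDoubleLadderII G ∨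
  IsLadderedBiwheelII G

/-- An `R`-ladder configuration: a subgraph `K` of `H := G − R` which is a
ladder with external rungs `au` and `bw` (free corners `u`, `w`) such that
every vertex of `K` except possibly `u` and `w` is cubic in `G`, the corners
`a` and `b` lie in `V(R)`, and every internal rung is an `R`-thin edge of `G`
whose index is two. -/
def RLadderConfig {V : Type*} (G : SimpleGraph V) (α β : Sym2 V)
    (K : (G.deleteEdges {α, β}).Subgraph) (a u b w : V) : Prop :=
  ∃ (m : ℕ) (hm : 3 ≤ m) (φ : ladderGraph m ≃g K.coe),
    (φ ((0 : Fin 2), (⟨0, by omega⟩ : Fin m))).val = a ∧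
    (φ ((1 : Fin 2), (⟨0, by omega⟩ : Fin m))).val = u ∧
    (if m % 2 = 1 then
        (φ ((0 : Fin 2), (⟨m - 1, by omega⟩ : Fin m))).val = w ∧
        (φ ((1 : Fin 2), (⟨m - 1, by omega⟩ : Fin m))).val = b
      else
        (φ ((1 : Fin 2), (⟨m - 1, by omega⟩ : Fin m))).val = w ∧
        (φ ((0 : Fin 2), (⟨m - 1, by omega⟩ : Fin m))).val = b) ∧
    (∀ v ∈ K.verts, v ≠ u → v ≠ w → degOf G v = 3) ∧
    a ∈ VR α β ∧ b ∈ VR α β ∧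
    (∀ i : Fin m, 0 < i.val → i.val < m - 1 →
      RThin G α β s((φ ((0 : Fin 2), i)).val, (φ ((1 : Fin 2), i)).val) ∧
      barrierIndex
        (G.deleteEdges {s((φ ((0 : Fin 2), i)).val, (φ ((1 : Fin 2), i)).val)}) = 2)

/-- An `R`-biwheel configuration: a subgraph `K` of `H := G − R` which is a
partial biwheel with external spokes `au` and `bw` (hubs `u`, `w`) such that
the hubs are not cubic in `G`, every other vertex of `K` is cubic in `G`, the
ends `a` and `b` lie in `V(R)`, and every internal spoke is an `R`-thin edge
of `G` whose index is one. -/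
def RBiwheelConfig {V : Type*} (G : SimpleGraph V) (α β : Sym2 V)
    (K : (G.deleteEdges {α, β}).Subgraph) (a u b w : V) : Prop :=
  ∃ (k : ℕ) (hk : 2 ≤ k) (φ : biwheelGraph k ≃g K.coe),
    (φ (Sum.inl (⟨0, by omega⟩ : Fin (2 * k)))).val = a ∧
    (φ (Sum.inl (⟨2 * k - 1, by omega⟩ : Fin (2 * k)))).val = b ∧
    (φ (Sum.inr 0)).val = u ∧
    (φ (Sum.inr 1)).val = w ∧
    degOf G u ≠ 3 ∧ degOf G w ≠ 3 ∧
    (∀ v ∈ K.verts, v ≠ u → v ≠ w → degOf G v = 3) ∧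
    a ∈ VR α β ∧ b ∈ VR α β ∧
    (∀ e ∈ K.edgeSet, (u ∈ e ∨ w ∈ e) → e ≠ s(a, u) → e ≠ s(b, w) →
      RThin G α β e ∧ barrierIndex (G.deleteEdges {e}) = 1)

/-- An `R`-configuration: an `R`-ladder or an `R`-biwheel, with free corners
`u` and `w`. -/
def RConfig {V : Type*} (G : SimpleGraph V) (α β : Sym2 V)
    (K : (G.deleteEdges {α, β}).Subgraph) (a u b w : V) : Prop :=
  RLadderConfig G α β K a u b w ∨ RBiwheelConfig G α β K a u b w

/-- A 4-cycle on the four (distinct) vertices `v0 v1 v2 v3`. -/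
def Is4Cycle {V : Type*} (H : SimpleGraph V) (v0 v1 v2 v3 : V) : Prop :=
  v0 ≠ v1 ∧ v0 ≠ v2 ∧ v0 ≠ v3 ∧ v1 ≠ v2 ∧ v1 ≠ v3 ∧ v2 ≠ v3 ∧
  H.Adj v0 v1 ∧ H.Adj v1 v2 ∧ H.Adj v2 v3 ∧ H.Adj v3 v0

/-- The cut `∂(X)`. -/
def edgeCutOf {V : Type*} (G : SimpleGraph V) (X : Set V) : Set (Sym2 V) :=
  {e | e ∈ G.edgeSet ∧ ∃ p q : V, e = s(p, q) ∧ p ∈ X ∧ q ∉ X}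

/-- The cut `∂(X)` is tight: every perfect matching contains exactly one of
its edges. -/
def TightCut {V : Type*} (G : SimpleGraph V) (X : Set V) : Prop :=
  ∀ M : G.Subgraph, M.IsPerfectMatching → (M.edgeSet ∩ edgeCutOf G X).ncard = 1

/-- A brace: a bipartite matching covered graph with no nontrivial tight cut. -/
def IsBrace {V : Type*} (G : SimpleGraph V) : Prop :=
  BipartiteGraph G ∧ MatchingCovered G ∧
    ¬ ∃ X : Set V, 2 ≤ X.ncard ∧ 2 ≤ Xᶜ.ncard ∧ TightCut G X


/-! A connected bipartite graph `G` with a perfect matching `M` and a colour class `A` is matching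
covered exactly when the digraph `D(M)` (edges of `G` leave `A`, edges of `M` go both ways) is
strongly connected: an edge `ab` with `a ∈ A` lies in a perfect matching iff `D(M)` has a path
from `b` to `a`.

Extend a perfect matching `N₀` of `K - e` by one of `H - V(K)` to a perfect matching `M₀` of
`H - e`. As `K - e` is matching covered, `D_{K-e}(N₀)` is strongly connected, so any two vertices
of `K`, in particular the ends of `e`, are joined in `D_{H-e}(M₀)`. Hence every arc of `D_H(M₀)`,
which is strongly connected because `H` is matching covered, is bridged in `D_{H-e}(M₀)`, and
`H - e` is matching covered. -/

open Relation

def Digraph.IsStronglyConnected {V : Type*} (D : Digraph V) : Prop :=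
  ∀ u v, ReflTransGen D.Adj u v

theorem Relation.ReflTransGen.symm_apply_of_forall_apply {α : Type*} [Finite α]
    {r : α → α → Prop} {σ : Equiv.Perm α} {S : Set α} (hS : ∀ u ∈ S, σ u ∈ S)
    (hr : ∀ u ∈ S, ReflTransGen r u (σ u)) {u : α} (hu : u ∈ S) :
    ReflTransGen r u (σ.symm u) := by
  obtain ⟨n, hn⟩ := (Equiv.Perm.sameCycle_symm_apply_right.mpr
    (Equiv.Perm.SameCycle.refl σ u)).exists_nat_pow_eq
  suffices ∀ n : ℕ, (σ ^ n) u ∈ S ∧ ReflTransGen r u ((σ ^ n) u) from hn ▸ (this n).2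
  intro n
  induction n with
  | zero => exact ⟨hu, .refl⟩
  | succ n ih =>
    rw [pow_succ', Equiv.Perm.mul_apply]
    exact ⟨hS _ ih.1, ih.2.trans (hr _ ih.1)⟩

namespace SimpleGraph

variable {V W : Type*} {G : SimpleGraph V} {A : Set V}

namespace Subgraph.IsPerfectMatching

variable {M : G.Subgraph}

noncomputable def mate (hM : M.IsPerfectMatching) (v : V) : V :=
  (isPerfectMatching_iff.mp hM v).choose

theorem adj_mate (hM : M.IsPerfectMatching) (v : V) : M.Adj v (hM.mate v) :=
  (isPerfectMatching_iff.mp hM v).choose_spec.1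

theorem mate_eq_of_adj (hM : M.IsPerfectMatching) {v w : V} (h : M.Adj v w) : hM.mate v = w :=
  ((isPerfectMatching_iff.mp hM v).choose_spec.2 w h).symm

theorem mate_involutive (hM : M.IsPerfectMatching) : Function.Involutive hM.mate :=
  fun v => hM.mate_eq_of_adj (hM.adj_mate v).symm

end Subgraph.IsPerfectMatching

theorem IsBipartiteWith.notMem_iff_of_adj (hG : G.IsBipartiteWith A Aᶜ) {u v : V}
    (h : G.Adj u v) : v ∉ A ↔ u ∈ A := by
  rcases hG.mem_of_adj h with ⟨hu, hv⟩ | ⟨hu, hv⟩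
  · exact iff_of_true hv hu
  · exact iff_of_false (not_not.mpr hv) hu

theorem IsBipartiteWith.comap {G' : SimpleGraph W} (f : G' →g G) (hG : G.IsBipartiteWith A Aᶜ) :
    G'.IsBipartiteWith (f ⁻¹' A) (f ⁻¹' A)ᶜ :=
  ⟨disjoint_compl_right, fun _ _ h => hG.mem_of_adj (f.map_adj h)⟩

def Subgraph.deleteEdgesHom (K : G.Subgraph) (x y : K.verts) :
    K.coe.deleteEdges {s(x, y)} →g G.deleteEdges {s(x.1, y.1)} where
  toFun := Subtype.val
  map_rel' h := by
    obtain ⟨hpq, hne⟩ := SimpleGraph.deleteEdges_adj.mp h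
    refine SimpleGraph.deleteEdges_adj.mpr ⟨K.adj_sub hpq, fun he => hne ?_⟩
    rw [Set.mem_singleton_iff] at he ⊢
    exact Sym2.map.injective Subtype.val_injective (by simpa using he)

theorem deleteEdges_adj_of_induce_compl {S : Set V} {u v : ↥Sᶜ} (h : (G.induce Sᶜ).Adj u v)
    {x y : V} (hx : x ∈ S) (hy : y ∈ S) : (G.deleteEdges {s(x, y)}).Adj u v := by
  refine deleteEdges_adj.mpr ⟨h, fun he => u.2 ?_⟩
  rcases Sym2.mem_iff.mp (Set.mem_singleton_iff.mp he ▸ Sym2.mem_mk_left _ _) with rfl | rfl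
  exacts [hx, hy]

theorem exists_isPerfectMatching_of_compl {S : Set V} {G₁ : SimpleGraph S} {G₂ : SimpleGraph ↥Sᶜ}
    (h₁ : ∀ ⦃u v⦄, G₁.Adj u v → G.Adj u v) (h₂ : ∀ ⦃u v⦄, G₂.Adj u v → G.Adj u v)
    {N₁ : G₁.Subgraph} (hN₁ : N₁.IsPerfectMatching) {N₂ : G₂.Subgraph}
    (hN₂ : N₂.IsPerfectMatching) :
    ∃ M : G.Subgraph, M.IsPerfectMatching ∧ ∀ ⦃u v : S⦄, N₁.Adj u v → M.Adj u v := by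
  let f₁ : G₁ →g G := ⟨Subtype.val, fun h => h₁ h⟩
  let f₂ : G₂ →g G := ⟨Subtype.val, fun h => h₂ h⟩
  have hverts₁ : (N₁.map f₁).verts = S := by
    rw [Subgraph.map_verts, Subgraph.isSpanning_iff.mp hN₁.2, Set.image_univ]
    exact Subtype.range_coe
  have hverts₂ : (N₂.map f₂).verts = Sᶜ := by
    rw [Subgraph.map_verts, Subgraph.isSpanning_iff.mp hN₂.2, Set.image_univ]
    exact Subtype.range_coe
  have hm₁ := hN₁.1.map f₁ Subtype.val_injective
  have hm₂ := hN₂.1.map f₂ Subtype.val_injective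
  refine ⟨N₁.map f₁ ⊔ N₂.map f₂, ⟨hm₁.sup hm₂ ?_, ?_⟩, fun u v h => ?_⟩
  · rw [hm₁.support_eq_verts, hm₂.support_eq_verts, hverts₁, hverts₂]
    exact disjoint_compl_right
  · rw [Subgraph.isSpanning_iff, Subgraph.verts_sup, hverts₁, hverts₂, Set.union_compl_self]
  · exact Subgraph.sup_adj.mpr (Or.inl ⟨u, v, h, rfl, rfl⟩)

theorem exists_isPerfectMatching_of_forall_subset_ncard_le [Finite V]
    (hG : G.IsBipartiteWith A Aᶜ)
    (hA : ∀ s ⊆ A, s.ncard ≤ (⋃ x ∈ s, G.neighborSet x).ncard)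
    (hAc : ∀ s ⊆ Aᶜ, s.ncard ≤ (⋃ x ∈ s, G.neighborSet x).ncard) :
    ∃ M : G.Subgraph, M.IsPerfectMatching := by
  classical
  have := Fintype.ofFinite V
  refine exists_isPerfectMatching_of_forall_ncard_le hG fun s => ?_
  have hdisj : Disjoint (⋃ x ∈ s ∩ A, G.neighborSet x) (⋃ x ∈ s \ A, G.neighborSet x) := by
    refine Set.disjoint_left.mpr fun y hy hy' => ?_
    obtain ⟨x, hx, hxy⟩ := Set.mem_iUnion₂.mp hy
    obtain ⟨x', hx', hx'y⟩ := Set.mem_iUnion₂.mp hy'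
    exact (hG.notMem_iff_of_adj hxy).mpr hx.2 ((hG.notMem_iff_of_adj hx'y.symm).mp hx'.2)
  calc s.ncard = (s ∩ A).ncard + (s \ A).ncard :=
        (Set.ncard_inter_add_ncard_sdiff_eq_ncard s A).symm
    _ ≤ (⋃ x ∈ s ∩ A, G.neighborSet x).ncard + (⋃ x ∈ s \ A, G.neighborSet x).ncard :=
      add_le_add (hA _ Set.inter_subset_right) (hAc _ fun _ hx => hx.2)
    _ = ((⋃ x ∈ s ∩ A, G.neighborSet x) ∪ ⋃ x ∈ s \ A, G.neighborSet x).ncard :=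
      (Set.ncard_union_eq hdisj).symm
    _ ≤ (⋃ x ∈ s, G.neighborSet x).ncard := Set.ncard_le_ncard (Set.union_subset
      (Set.biUnion_subset_biUnion_left Set.inter_subset_left)
      (Set.biUnion_subset_biUnion_left Set.sdiff_subset))

/-- `G - a - b` together with the edge `ab`: its perfect matchings are the perfect matchings of
`G` through `ab`. -/
def isolateEdge (G : SimpleGraph V) (a b : V) : SimpleGraph V where
  Adj u v := G.Adj u v ∧ (u = a ↔ v = b) ∧ (u = b ↔ v = a)
  symm := ⟨fun _ _ h => ⟨h.1.symm, h.2.2.symm, h.2.1.symm⟩⟩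
  loopless := ⟨fun u h => G.loopless.irrefl u h.1⟩

theorem isolateEdge_comm {a b : V} : G.isolateEdge a b = G.isolateEdge b a := by
  ext u v
  exact and_congr_right' and_comm

theorem isolateEdge_le {a b : V} : G.isolateEdge a b ≤ G := fun _ _ h => h.1

theorem exists_isPerfectMatching_adj_of_isolateEdge {a b : V}
    {N : (G.isolateEdge a b).Subgraph} (hN : N.IsPerfectMatching) :
    ∃ M : G.Subgraph, M.IsPerfectMatching ∧ M.Adj a b := by
  refine ⟨N.map (Hom.ofLE isolateEdge_le), ⟨hN.1.map _ Function.injective_id, ?_⟩, ?_⟩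
  · rw [Subgraph.isSpanning_iff, Subgraph.map_verts, Subgraph.isSpanning_iff.mp hN.2]
    exact Set.image_univ_of_surjective Function.surjective_id
  · have hb : hN.mate a = b := (N.adj_sub (hN.adj_mate a)).2.1.mp rfl
    exact Relation.map_apply_apply (fun _ _ h => h) (fun _ _ h => h) N.Adj a b |>.mpr
      (by simpa only [hb] using hN.adj_mate a)

/-- The digraph `D(M)` of a bipartite graph `G` with colour class `A` and matching `M`: the edges
of `G` leave `A`, and the edges of `M` are traversable both ways. -/
def matchingDigraph (G M : SimpleGraph V) (A : Set V) : Digraph V where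
  Adj u v := u ∈ A ∧ G.Adj u v ∨ M.Adj u v

theorem reflTransGen_matchingDigraph_map {G' : SimpleGraph W} (f : G →g G') {A' : Set W}
    {M : SimpleGraph V} {M' : SimpleGraph W} (hM : ∀ ⦃u v⦄, M.Adj u v → M'.Adj (f u) (f v))
    {u v : V} (h : ReflTransGen (matchingDigraph G M (f ⁻¹' A')).Adj u v) :
    ReflTransGen (matchingDigraph G' M' A').Adj (f u) (f v) :=
  ReflTransGen.lift f (fun _ _ h => h.imp (fun h => ⟨h.1, f.map_adj h.2⟩) (fun h => hM h)) _ _ h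

theorem isStronglyConnected_matchingDigraph_deleteEdges {M : SimpleGraph V} {x y : V}
    (hD : (matchingDigraph G M A).IsStronglyConnected)
    (hxy : ReflTransGen (matchingDigraph (G.deleteEdges {s(x, y)}) M A).Adj x y)
    (hyx : ReflTransGen (matchingDigraph (G.deleteEdges {s(x, y)}) M A).Adj y x) :
    (matchingDigraph (G.deleteEdges {s(x, y)}) M A).IsStronglyConnected := by
  refine fun u v => ReflTransGen.lift' id (fun u v huv => ?_) _ _ (hD u v)
  by_cases he : s(u, v) = s(x, y)
  · rcases Sym2.eq_iff.mp he with ⟨rfl, rfl⟩ | ⟨rfl, rfl⟩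
    exacts [hxy, hyx]
  · exact .single (huv.imp (fun h => ⟨h.1, deleteEdges_adj.mpr ⟨h.2, he⟩⟩) id)

section PerfectMatching

variable {M N : G.Subgraph} {a b : V}

theorem matchingDigraph_adj_le {u v : V} (h : (matchingDigraph G M.spanningCoe A).Adj u v) :
    G.Adj u v :=
  h.elim And.right fun h => M.adj_sub h

theorem matchingDigraph_adj_compl_of_adj (hG : G.IsBipartiteWith A Aᶜ) {u v : V}
    (h : (matchingDigraph G M.spanningCoe A).Adj u v) :
    (matchingDigraph G M.spanningCoe Aᶜ).Adj v u :=
  h.imp (fun h => ⟨(hG.notMem_iff_of_adj h.2).mpr h.1, h.2.symm⟩) (fun h => h.symm)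

/-- Following `M` out of `Aᶜ` and `N` out of `A` traces the cycle of `M ∆ N` through the edge
`ab` of `N`: the orbit of `b` under `N ∘ M` reaches `M a`. -/
theorem reflTransGen_matchingDigraph_of_adj [Finite V] (hG : G.IsBipartiteWith A Aᶜ)
    (hM : M.IsPerfectMatching) (hN : N.IsPerfectMatching) (ha : a ∈ A) (hab : N.Adj a b) :
    ReflTransGen (matchingDigraph G M.spanningCoe A).Adj b a := by
  let σ : Equiv.Perm V := hM.mate_involutive.toPerm.trans hN.mate_involutive.toPerm
  have hmate : ∀ u, u ∉ A → hM.mate u ∈ A := fun u hu =>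
    (hG.notMem_iff_of_adj (M.adj_sub (hM.adj_mate u)).symm).mp hu
  have hσ : ∀ u ∉ A, σ u ∉ A := fun u hu =>
    (hG.notMem_iff_of_adj (N.adj_sub (hN.adj_mate _))).mpr (hmate u hu)
  have hstep : ∀ u ∉ A, ReflTransGen (matchingDigraph G M.spanningCoe A).Adj u (σ u) :=
    fun u hu => .tail (.single (Or.inr (hM.adj_mate u)))
      (Or.inl ⟨hmate u hu, N.adj_sub (hN.adj_mate _)⟩)
  have hb : b ∉ A := (hG.notMem_iff_of_adj (N.adj_sub hab)).mpr ha
  have hσb : σ.symm b = hM.mate a := by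
    simp [σ, hN.mate_eq_of_adj hab.symm]
  have hpath := ReflTransGen.symm_apply_of_forall_apply (S := Aᶜ) hσ hstep hb
  rw [hσb] at hpath
  exact hpath.tail (Or.inr (hM.adj_mate a).symm)

/-- If `X ⊆ A - a` had at most `|X|` neighbours besides `b` while `b` reaches `a`, the
neighbourhood of `X` would be `M(X)`; then `X ∪ M(X)` is closed in `D(M)`, contains `b` and
misses `a`. -/
theorem ncard_le_ncard_iUnion_neighborSet_sdiff [Finite V] (hG : G.IsBipartiteWith A Aᶜ)
    (hM : M.IsPerfectMatching) (ha : a ∈ A)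
    (hpath : ReflTransGen (matchingDigraph G M.spanningCoe A).Adj b a)
    {X : Set V} (hX : X ⊆ A) (haX : a ∉ X) :
    X.ncard ≤ ((⋃ x ∈ X, G.neighborSet x) \ {b}).ncard := by
  set NX := ⋃ x ∈ X, G.neighborSet x
  set Y := hM.mate '' X
  by_contra! hlt
  have hY : Y.ncard = X.ncard := Set.ncard_image_of_injective X hM.mate_involutive.injective
  have hYN : Y ⊆ NX := by
    rintro _ ⟨x, hx, rfl⟩
    exact Set.mem_biUnion hx (M.adj_sub (hM.adj_mate x))
  have hbN : b ∈ NX := by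
    by_contra hb
    rw [Set.sdiff_singleton_eq_self hb] at hlt
    exact (Set.ncard_le_ncard hYN).not_gt (hY ▸ hlt)
  have hNY : NX = Y := (Set.eq_of_subset_of_ncard_le hYN (by
    have := Set.ncard_sdiff_singleton_add_one hbN
    have := Set.ncard_le_ncard hYN
    omega)).symm
  have hmate_notMem : ∀ x ∈ X, hM.mate x ∉ A := fun x hx =>
    (hG.notMem_iff_of_adj (M.adj_sub (hM.adj_mate x))).mpr (hX hx)
  have hclosed : ∀ u v, u ∈ X ∪ Y → (matchingDigraph G M.spanningCoe A).Adj u v → v ∈ X ∪ Y := by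
    rintro u v (hu | ⟨x, hx, rfl⟩) (⟨hA, huv⟩ | huv)
    · exact Or.inr (hNY ▸ Set.mem_biUnion hu huv)
    · exact Or.inr ⟨u, hu, hM.mate_eq_of_adj huv⟩
    · exact absurd hA (hmate_notMem x hx)
    · have hv := hM.mate_eq_of_adj huv
      rw [hM.mate_involutive x] at hv
      exact Or.inl (hv ▸ hx)
  have hreach : ∀ v, ReflTransGen (matchingDigraph G M.spanningCoe A).Adj b v → v ∈ X ∪ Y := by
    intro v hv
    induction hv with
    | refl => exact Or.inr (hNY ▸ hbN)
    | tail _ h ih => exact hclosed _ _ ih h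
  rcases hreach a hpath with haX' | ⟨x, hx, rfl⟩
  · exact haX haX'
  · exact hmate_notMem x hx ha

theorem ncard_le_ncard_iUnion_neighborSet_isolateEdge [Finite V] (hG : G.IsBipartiteWith A Aᶜ)
    (hM : M.IsPerfectMatching) (ha : a ∈ A) (hab : G.Adj a b)
    (hpath : ReflTransGen (matchingDigraph G M.spanningCoe A).Adj b a)
    {s : Set V} (hs : s ⊆ A) :
    s.ncard ≤ (⋃ x ∈ s, (G.isolateEdge a b).neighborSet x).ncard := by
  have hb : b ∉ A := (hG.notMem_iff_of_adj hab).mpr ha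
  have hX := ncard_le_ncard_iUnion_neighborSet_sdiff hG hM ha hpath (X := s \ {a})
    (Set.sdiff_subset.trans hs) (fun h => h.2 rfl)
  have hsub : (⋃ x ∈ s \ {a}, G.neighborSet x) \ {b} ⊆
      ⋃ x ∈ s, (G.isolateEdge a b).neighborSet x := by
    rintro y ⟨hy, hyb⟩
    obtain ⟨x, ⟨hxs, hxa⟩, hxy⟩ := Set.mem_iUnion₂.mp hy
    have hya : y ≠ a := fun h => (hG.notMem_iff_of_adj hxy).mpr (hs hxs) (h ▸ ha)
    have hxb : x ≠ b := fun h => hb (h ▸ hs hxs)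
    exact Set.mem_biUnion hxs ⟨hxy, iff_of_false hxa hyb, iff_of_false hxb hya⟩
  by_cases has : a ∈ s
  · have hbs : b ∈ ⋃ x ∈ s, (G.isolateEdge a b).neighborSet x :=
      Set.mem_biUnion has ⟨hab, iff_of_true rfl rfl, iff_of_false hab.ne hab.ne.symm⟩
    calc s.ncard = (s \ {a}).ncard + 1 := (Set.ncard_sdiff_singleton_add_one has).symm
      _ ≤ ((⋃ x ∈ s \ {a}, G.neighborSet x) \ {b}).ncard + 1 := by omega
      _ = (insert b ((⋃ x ∈ s \ {a}, G.neighborSet x) \ {b})).ncard :=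
        (Set.ncard_insert_of_notMem (fun h => h.2 rfl)).symm
      _ ≤ _ := Set.ncard_le_ncard (Set.insert_subset hbs hsub)
  · rw [Set.sdiff_singleton_eq_self has] at hX hsub
    exact hX.trans (Set.ncard_le_ncard hsub)

/-- Instead of switching `M` along the path, check Hall's condition for `G.isolateEdge a b` on
both colour classes; reversed, the path serves the class `Aᶜ`. -/
theorem exists_isPerfectMatching_adj_of_reflTransGen [Finite V] (hG : G.IsBipartiteWith A Aᶜ)
    (hM : M.IsPerfectMatching) (ha : a ∈ A) (hab : G.Adj a b)
    (hpath : ReflTransGen (matchingDigraph G M.spanningCoe A).Adj b a) :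
    ∃ M' : G.Subgraph, M'.IsPerfectMatching ∧ M'.Adj a b := by
  have hG' : (G.isolateEdge a b).IsBipartiteWith A Aᶜ :=
    ⟨hG.disjoint, fun _ _ h => hG.mem_of_adj h.1⟩
  have hGc : G.IsBipartiteWith Aᶜ Aᶜᶜ := by rw [compl_compl]; exact hG.symm
  have hpath' : ReflTransGen (matchingDigraph G M.spanningCoe Aᶜ).Adj a b :=
    ReflTransGen.mono (fun _ _ h => matchingDigraph_adj_compl_of_adj hG h) _ _
      (ReflTransGen.swap _ _ hpath)
  obtain ⟨N, hN⟩ := exists_isPerfectMatching_of_forall_subset_ncard_le hG'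
    (fun s hs => ncard_le_ncard_iUnion_neighborSet_isolateEdge hG hM ha hab hpath hs)
    (fun s hs => isolateEdge_comm (G := G) ▸
      ncard_le_ncard_iUnion_neighborSet_isolateEdge hGc hM ((hG.notMem_iff_of_adj hab).mpr ha)
        hab.symm hpath' hs)
  exact exists_isPerfectMatching_adj_of_isolateEdge hN

end PerfectMatching

end SimpleGraph

open SimpleGraph

section MatchingCovered

variable {V : Type*} {G : SimpleGraph V} {A : Set V} {M : G.Subgraph}

theorem BipartitionOf.isBipartiteWith_compl {B : Set V} (h : BipartitionOf G A B) :
    G.IsBipartiteWith A Aᶜ := by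
  obtain ⟨hunion, hdisj, hadj⟩ := h
  have hcover : ∀ w, w ∉ A → w ∈ B := fun w hw =>
    ((Set.mem_union w A B).mp (hunion ▸ Set.mem_univ w)).resolve_left hw
  refine ⟨disjoint_compl_right, fun u v huv => ?_⟩
  by_cases hu : u ∈ A
  · exact Or.inl ⟨hu, Set.disjoint_right.mp hdisj ((hadj huv).mp hu)⟩
  · exact Or.inr ⟨hu, by_contra fun hv => hu ((hadj huv).mpr (hcover v hv))⟩

theorem MatchingCovered.exists_isPerfectMatching (hmc : MatchingCovered G) :
    ∃ M : G.Subgraph, M.IsPerfectMatching := by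
  have : Finite V := Nat.finite_of_card_ne_zero (by have := hmc.1; omega)
  have := Finite.one_lt_card_iff_nontrivial.mp hmc.1
  obtain ⟨v⟩ := hmc.2.1.nonempty
  obtain ⟨w, hvw⟩ := hmc.2.1.preconnected.exists_adj_of_nontrivial v
  obtain ⟨M, hM, -⟩ := hmc.2.2 s(v, w) hvw
  exact ⟨M, hM⟩

theorem MatchingCovered.isStronglyConnected_matchingDigraph [Finite V]
    (hmc : MatchingCovered G) (hG : G.IsBipartiteWith A Aᶜ) (hM : M.IsPerfectMatching) :
    (matchingDigraph G M.spanningCoe A).IsStronglyConnected := by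
  have hadj : ∀ u v, G.Adj u v → ReflTransGen (matchingDigraph G M.spanningCoe A).Adj u v := by
    intro u v huv
    by_cases hu : u ∈ A
    · exact .single (Or.inl ⟨hu, huv⟩)
    · obtain ⟨N, hN, huvN⟩ := hmc.2.2 s(u, v) huv
      exact reflTransGen_matchingDigraph_of_adj hG hM hN
        ((hG.notMem_iff_of_adj huv.symm).mp hu) (Subgraph.mem_edgeSet.mp huvN).symm
  exact fun u v => ReflTransGen.lift' id hadj _ _
    ((reachable_iff_reflTransGen u v).mp (hmc.2.1.preconnected u v))

theorem matchingCovered_of_isStronglyConnected [Finite V] (hG : G.IsBipartiteWith A Aᶜ)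
    (hM : M.IsPerfectMatching) (hcard : 2 ≤ Nat.card V)
    (hD : (matchingDigraph G M.spanningCoe A).IsStronglyConnected) : MatchingCovered G := by
  have hreach : ∀ u v, G.Reachable u v := fun u v =>
    (reachable_iff_reflTransGen u v).mpr
      (ReflTransGen.mono (fun _ _ => matchingDigraph_adj_le) _ _ (hD u v))
  refine ⟨hcard, (connected_iff G).mpr ⟨hreach, ?_⟩, ?_⟩
  · exact (Finite.one_lt_card_iff_nontrivial.mp hcard).to_nonempty
  · intro e he
    induction e using Sym2.ind with | _ u v => ?_
    rw [mem_edgeSet] at he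
    wlog hu : u ∈ A generalizing u v
    · obtain ⟨N, hN, hvu⟩ := this v u he.symm ((hG.notMem_iff_of_adj he.symm).mp hu)
      exact ⟨N, hN, Sym2.eq_swap ▸ hvu⟩
    obtain ⟨N, hN, huv⟩ := exists_isPerfectMatching_adj_of_reflTransGen hG hM hu he (hD v u)
    exact ⟨N, hN, huv⟩

end MatchingCovered

theorem stmt13_general {V : Type*} [Fintype V] (H : SimpleGraph V)
    (hMC : MatchingCovered H) (hbip : BipartiteGraph H)
    (K : H.Subgraph)
    (hconf : HasPerfMatching (H.induce (K.vertsᶜ : Set V)))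
    (e : Sym2 ↥K.verts) (he : RemovableEdge K.coe e) :
    RemovableEdge H (Sym2.map Subtype.val e) := by
  induction e using Sym2.ind with | _ x y => ?_
  rw [Sym2.map_mk]
  obtain ⟨hxy, hKe⟩ := he
  obtain ⟨A, B, hAB⟩ := hbip
  have hA := hAB.isBipartiteWith_compl
  have hAe : (H.deleteEdges {s(x.1, y.1)}).IsBipartiteWith A Aᶜ :=
    hA.comap (Hom.ofLE (H.deleteEdges_le _))
  let f := K.deleteEdgesHom x y
  obtain ⟨N₀, hN₀⟩ := hKe.exists_isPerfectMatching
  obtain ⟨P, hP⟩ := hconf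
  obtain ⟨M₀, hM₀, hN₀M₀⟩ := exists_isPerfectMatching_of_compl (fun _ _ h => f.map_adj h)
    (fun _ _ h => deleteEdges_adj_of_induce_compl h x.2 y.2) hN₀ hP
  have hDK := hKe.isStronglyConnected_matchingDigraph (hAe.comap f) hN₀
  have hDH := hMC.isStronglyConnected_matchingDigraph hA
    ((Subgraph.IsPerfectMatching.toSubgraph_iff
      (M₀.spanningCoe_le.trans (H.deleteEdges_le _))).mpr hM₀)
  exact ⟨K.adj_sub hxy, matchingCovered_of_isStronglyConnected hAe hM₀ hMC.1
    (isStronglyConnected_matchingDigraph_deleteEdges hDH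
      (reflTransGen_matchingDigraph_map f (fun _ _ h => hN₀M₀ h) (hDK x y))
      (reflTransGen_matchingDigraph_map f (fun _ _ h => hN₀M₀ h) (hDK y x)))⟩

/-- a removable edge of a conformal matching covered subgraph is
removable in the host graph. -/
theorem stmt13 {V : Type*} [Fintype V] (H : SimpleGraph V)
    (hMC : MatchingCovered H) (hbip : BipartiteGraph H)
    (K : H.Subgraph) (hKmc : MatchingCovered K.coe)
    (hconf : HasPerfMatching (H.induce (K.vertsᶜ : Set V)))
    (e : Sym2 ↥K.verts) (he : RemovableEdge K.coe e) :
    RemovableEdge H (Sym2.map Subtype.val e) :=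
  stmt13_general H hMC hbip K hconf e he
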